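/- Let V be a Banach space densely and continuously embedded in a Banach space E, P a metric space, and {A^{(μ)}(t)}_{t≥0}, μ∈P, families satisfying the hyperbolic conditions (Hyp1)–(Hyp3) with constants M, ω, M_V, ω_V independent of μ; let {R^{(μ)}(t,s)}_{t≥s≥0} be the evolution systems determined by these families (the unique evolution systems satisfying the exponential bound M e^{ω(t−s)} and the forward/backward differential identities on V). If for every μ∈P and T>0 one has lim_{ν→μ} ∫₀^T ‖A^{(ν)}(r) − A^{(μ)}(r)‖_{L(V,E)} dr = 0, then the family {R^{(μ)}}_{μ∈P} is continuous: for every ū∈E, every μ∈P and every sequence μ_n → μ in P, R^{(μ_n)}(t,s)ū → R^{(μ)}(t,s)ū, uniformly with respect to t≥s≥0 from bounded intervals. -/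

import Mathlib

/-!
Freeze the limit coefficient `A` on a partition `s = τ₀ ≤ ⋯ ≤ τₖ = t` of small mesh and compare
any evolution system `R'` determined by a family `A'` with the product
`Π = S_{A(τₖ₋₁)}(τₖ - τₖ₋₁) ⋯ S_{A(τ₀)}(τ₁ - τ₀)` on `v ∈ V`. On `[τᵢ, τᵢ₊₁]` the curve
`σ ↦ R'(t,σ) S_{A(τᵢ)}(σ - τᵢ) w` has right derivative `R'(t,σ) (A(τᵢ) - A'(σ)) y(σ)`, where
`y(σ) ∈ V` is bounded by stability in `V`; the fencing theorem and telescoping give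
`‖Πv - R'(t,s)v‖ ≤ C K ∫ₛᵗ (‖A(τᵢ) - A(σ)‖ + ‖A'(σ) - A(σ)‖) dσ`, with `C` and `K` the
exponential bounds on `R'` in `E` and on the partial products in `V`. Uniform continuity of `A`
makes the first term small and the `L¹` hypothesis the second, both for `R' = R^{(μₙ)}` and for
`R' = R^{(μ)}`, uniformly in `0 ≤ s ≤ t ≤ T`; the uniform bound `M e^{|ω|T}` and density of `V`
pass from `V` to `E`.
-/

open MeasureTheory Filter Set Topology

/-- An evolution system on a Banach space `E`. -/
def IsEvolutionSystem {E : Type*} [NormedAddCommGroup E] [NormedSpace ℝ E]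
    (R : ℝ → ℝ → E →L[ℝ] E) : Prop :=
  (∀ t : ℝ, 0 ≤ t → R t t = ContinuousLinearMap.id ℝ E) ∧
  (∀ t s r : ℝ, 0 ≤ r → r ≤ s → s ≤ t → (R t s).comp (R s r) = R t r) ∧
  (∀ u : E, ContinuousOn (fun p : ℝ × ℝ => R p.1 p.2 u) {p : ℝ × ℝ | 0 ≤ p.2 ∧ p.2 ≤ p.1})

/-- A `C₀` semigroup of bounded linear operators on `E`. -/
def IsC0Semigroup {E : Type*} [NormedAddCommGroup E] [NormedSpace ℝ E]
    (S : ℝ → E →L[ℝ] E) : Prop :=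
  S 0 = ContinuousLinearMap.id ℝ E ∧
  (∀ t s : ℝ, 0 ≤ t → 0 ≤ s → S (t + s) = (S t).comp (S s)) ∧
  (∀ u : E, ContinuousOn (fun t : ℝ => S t u) (Set.Ici 0))

/-- The composition `S(t_{n-1})(s_{n-1}) ∘ ⋯ ∘ S(t_0)(s_0)` of members of a two-parameter
family of operators. -/
def prodOps {E : Type*} [NormedAddCommGroup E] [NormedSpace ℝ E]
    (S : ℝ → ℝ → E →L[ℝ] E) (t s : ℕ → ℝ) : ℕ → E →L[ℝ] E
  | 0 => ContinuousLinearMap.id ℝ E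
  | n + 1 => (S (t n) (s n)).comp (prodOps S t s n)

/-- Stability of a family `{S(t)}_{t ≥ 0}` of semigroups with constants `M`, `ω`:
`‖S(tₙ)(sₙ) ⋯ S(t₁)(s₁)‖ ≤ M e^{ω(s₁+⋯+sₙ)}` for `0 ≤ t₁ ≤ ⋯ ≤ tₙ` and `sᵢ ≥ 0`. -/
def IsStableFamily {E : Type*} [NormedAddCommGroup E] [NormedSpace ℝ E]
    (S : ℝ → ℝ → E →L[ℝ] E) (M ω : ℝ) : Prop :=
  ∀ (n : ℕ) (t s : ℕ → ℝ), (∀ i, 0 ≤ t i) → (∀ i j, i ≤ j → t i ≤ t j) → (∀ i, 0 ≤ s i) →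
    ‖prodOps S t s n‖ ≤ M * Real.exp (ω * ∑ i ∈ Finset.range n, s i)

/-- The hyperbolic (Kato) conditions (Hyp1)–(Hyp3) for a family `{A(t)}_{t≥0}` of generators,
relative to a continuous dense embedding `ι : V → E`. Here `S t` is the `C₀` semigroup on `E`
generated by `A(t)`, `SV t` is its restriction to `V` (admissibility), and
`A t : V →L[ℝ] E` is the restriction of `A(t)` to `V` (so that `V ⊆ D(A(t))`). -/
structure IsHyperbolicFamily {V E : Type*}
    [NormedAddCommGroup V] [NormedSpace ℝ V]
    [NormedAddCommGroup E] [NormedSpace ℝ E]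
    (iota : V →L[ℝ] E) (A : ℝ → (V →L[ℝ] E))
    (S : ℝ → ℝ → E →L[ℝ] E) (SV : ℝ → ℝ → V →L[ℝ] V)
    (M om MV omV : ℝ) : Prop where
  /-- (Hyp1): each `S t` is a `C₀` semigroup on `E`. -/
  sem_E : ∀ t : ℝ, 0 ≤ t → IsC0Semigroup (S t)
  /-- (Hyp1)/(Hyp3): `A(t)v` is the generator of `S t` applied to `v ∈ V`. -/
  gen_on_V : ∀ t : ℝ, 0 ≤ t → ∀ v : V,
    Filter.Tendsto (fun h : ℝ => h⁻¹ • (S t h (iota v) - iota v)) (nhdsWithin 0 (Set.Ioi 0))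
      (nhds (A t v))
  /-- (Hyp1): stability on `E` with constants `M`, `ω`. -/
  stable_E : IsStableFamily S M om
  /-- (Hyp2): each restricted semigroup `SV t` is a `C₀` semigroup on `V`. -/
  sem_V : ∀ t : ℝ, 0 ≤ t → IsC0Semigroup (SV t)
  /-- (Hyp2): `V` is `A(t)`-admissible, `SV t` being the restriction of `S t` to `V`. -/
  compat : ∀ t h : ℝ, 0 ≤ t → 0 ≤ h → ∀ v : V, iota (SV t h v) = S t h (iota v)
  /-- (Hyp2): stability on `V` with constants `M_V`, `ω_V`. -/
  stable_V : IsStableFamily SV MV omV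
  /-- (Hyp3): `t ↦ A(t) ∈ L(V,E)` is norm continuous on `[0,∞)`. -/
  contA : ContinuousOn A (Set.Ici 0)

/-- `R` is the evolution system determined by the hyperbolic family `{A(t)}` (with
restriction data `ι`, constants `M`, `ω`): an evolution system satisfying the exponential
bound, the forward derivative identity at `t = s` and the backward derivative identity
on `V`. -/
def IsDeterminedEvolutionSystem {V E : Type*}
    [NormedAddCommGroup V] [NormedSpace ℝ V]
    [NormedAddCommGroup E] [NormedSpace ℝ E]
    (iota : V →L[ℝ] E) (A : ℝ → (V →L[ℝ] E)) (M om : ℝ)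
    (R : ℝ → ℝ → E →L[ℝ] E) : Prop :=
  IsEvolutionSystem R ∧
  (∀ t s : ℝ, 0 ≤ s → s ≤ t → ‖R t s‖ ≤ M * Real.exp (om * (t - s))) ∧
  (∀ s : ℝ, 0 ≤ s → ∀ v : V,
    Filter.Tendsto (fun h : ℝ => h⁻¹ • (R (s + h) s (iota v) - iota v))
      (nhdsWithin 0 (Set.Ioi 0)) (nhds (A s v))) ∧
  (∀ t : ℝ, ∀ v : V, ∀ s ∈ Set.Icc (0:ℝ) t,
    HasDerivWithinAt (fun σ : ℝ => R t σ (iota v)) (-(R t s (A s v))) (Set.Icc 0 t) s)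

theorem norm_sub_le_integral_of_norm_sub_succ_le {E : Type*} [SeminormedAddCommGroup E]
    {F : ℕ → E} {τ : ℕ → ℝ} {g : ℝ → ℝ} {k : ℕ}
    (hg : ∀ i < k, IntervalIntegrable g volume (τ i) (τ (i + 1)))
    (hF : ∀ i < k, ‖F (i + 1) - F i‖ ≤ ∫ x in τ i..τ (i + 1), g x) :
    ‖F k - F 0‖ ≤ ∫ x in τ 0..τ k, g x := by
  rw [← intervalIntegral.sum_integral_adjacent_intervals hg, ← dist_eq_norm, dist_comm]
  refine (dist_le_range_sum_dist F k).trans (Finset.sum_le_sum fun i hi => ?_)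
  rw [dist_comm, dist_eq_norm]
  exact hF i (Finset.mem_range.1 hi)

theorem mul_le_abs_mul_of_le {ω x T : ℝ} (hx : 0 ≤ x) (hxT : x ≤ T) : ω * x ≤ |ω| * T :=
  (mul_le_mul_of_nonneg_right (le_abs_self ω) hx).trans
    (mul_le_mul_of_nonneg_left hxT (abs_nonneg ω))

theorem integral_mul_add_le_of_subinterval {f : ℝ → ℝ} {c η s t T : ℝ} (hc : 0 ≤ c)
    (hη : 0 ≤ η) (hf : ContinuousOn f (Icc 0 T)) (hf0 : ∀ x, 0 ≤ f x) (hs : 0 ≤ s)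
    (hst : s ≤ t) (htT : t ≤ T) :
    ∫ x in s..t, c * (η + f x) ≤ c * (η * T + ∫ x in (0 : ℝ)..T, f x) := by
  have hT : 0 ≤ T := hs.trans (hst.trans htT)
  calc ∫ x in s..t, c * (η + f x)
      ≤ ∫ x in (0 : ℝ)..T, c * (η + f x) :=
        intervalIntegral.integral_mono_interval hs hst htT
          (.of_forall fun x => mul_nonneg hc (add_nonneg hη (hf0 x)))
          ((continuousOn_const.mul (continuousOn_const.add hf)).intervalIntegrable_of_Icc hT)
    _ = c * (η * T + ∫ x in (0 : ℝ)..T, f x) := by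
        rw [intervalIntegral.integral_const_mul, intervalIntegral.integral_add
          intervalIntegrable_const (hf.intervalIntegrable_of_Icc hT),
          intervalIntegral.integral_const]
        simp [mul_comm]

section General

variable {E : Type*} [NormedAddCommGroup E] [NormedSpace ℝ E]

theorem hasDerivWithinAt_Ici_iff_tendsto_slope_zero_right {f : ℝ → E} {f' : E} {x : ℝ} :
    HasDerivWithinAt f f' (Ici x) x ↔
      Tendsto (fun h : ℝ => h⁻¹ • (f (x + h) - f x)) (𝓝[>] 0) (𝓝 f') := by
  have : 𝓝[>] x = Filter.map (fun t ↦ x + t) (𝓝[>] 0) := by simp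
  rw [← hasDerivWithinAt_Ioi_iff_Ici, hasDerivWithinAt_iff_tendsto_slope' self_notMem_Ioi, this,
    tendsto_map'_iff]
  simp only [Function.comp_def, slope_def_module, add_sub_cancel_left]

theorem tendsto_clm_apply_of_norm_le {α : Type*} {l : Filter α} {T : α → E →L[ℝ] E}
    {c : α → E} {d y : E} {C : ℝ} (hT : ∀ᶠ i in l, ‖T i‖ ≤ C) (hc : Tendsto c l (𝓝 d))
    (hTd : Tendsto (fun i => T i d) l (𝓝 y)) :
    Tendsto (fun i => T i (c i)) l (𝓝 y) := by
  have hsmall : Tendsto (fun i => T i (c i - d)) l (𝓝 0) := by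
    refine squeeze_zero_norm' (hT.mono fun i hi => ?_)
      (by simpa using (hc.sub_const d).norm.const_mul C)
    exact ((T i).le_opNorm _).trans (mul_le_mul_of_nonneg_right hi (norm_nonneg _))
  simpa using hsmall.add hTd

theorem norm_sub_le_integral_of_norm_deriv_right_le {f f' : ℝ → E} {g : ℝ → ℝ} {a b : ℝ}
    (hab : a ≤ b) (hf : ContinuousOn f (Icc a b))
    (hf' : ∀ x ∈ Ico a b, HasDerivWithinAt f (f' x) (Ici x) x)
    (hg : ContinuousOn g (Icc a b)) (bound : ∀ x ∈ Ico a b, ‖f' x‖ ≤ g x) :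
    ‖f b - f a‖ ≤ ∫ x in a..b, g x := by
  have hprim : ∀ x ∈ Ico a b,
      HasDerivWithinAt (fun y => ∫ r in a..y, g r) (g x) (Ici x) x := by
    intro x hx
    have hnhds : Icc x b ∈ 𝓝[>] x := Icc_mem_nhdsGT hx.2
    refine intervalIntegral.integral_hasDerivWithinAt_right
      ((hg.mono (Icc_subset_Icc le_rfl hx.2.le)).intervalIntegrable_of_Icc hx.1)
      ⟨Icc x b, hnhds, (hg.mono (Icc_subset_Icc hx.1 le_rfl)).aestronglyMeasurable
        measurableSet_Icc⟩ ?_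
    exact (hg x (Ico_subset_Icc_self hx)).mono_of_mem_nhdsWithin
      (mem_of_superset hnhds (Icc_subset_Icc hx.1 le_rfl))
  have hprim_cont : ContinuousOn (fun y => ∫ r in a..y, g r) (Icc a b) := by
    simpa only [uIcc_of_le hab] using
      intervalIntegral.continuousOn_primitive_interval' (hg.intervalIntegrable_of_Icc hab)
        left_mem_uIcc
  simpa using image_norm_le_of_norm_deriv_right_le_deriv_boundary' (hf.sub continuousOn_const)
    (fun x hx => (hf' x hx).sub_const (f a)) (by simp) hprim_cont hprim bound
    (right_mem_Icc.2 hab)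

end General

section Density

variable {E F : Type*} [NormedAddCommGroup E] [NormedSpace ℝ E]
  [NormedAddCommGroup F] [NormedSpace ℝ F]

theorem dist_clm_apply_le_of_norm_le {T : E →L[ℝ] F} {C δ : ℝ} (hT : ‖T‖ ≤ C) {u v : E}
    (huv : dist u v ≤ δ) : dist (T u) (T v) ≤ C * δ := by
  rw [dist_eq_norm, ← map_sub]
  have hC : 0 ≤ C := (norm_nonneg T).trans hT
  exact (T.le_opNorm _).trans (mul_le_mul hT (by rwa [← dist_eq_norm]) (norm_nonneg _) hC)

theorem tendstoUniformlyOn_clm_apply_of_denseRange {X ι α : Type*} {j : X → E}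
    (hj : DenseRange j) {T : ι → α → E →L[ℝ] F} {T₀ : α → E →L[ℝ] F} {l : Filter ι}
    {s : Set α} {C : ℝ} (hT : ∀ i, ∀ p ∈ s, ‖T i p‖ ≤ C) (hT₀ : ∀ p ∈ s, ‖T₀ p‖ ≤ C)
    (h : ∀ x, TendstoUniformlyOn (fun i p => T i p (j x)) (fun p => T₀ p (j x)) l s) (u : E) :
    TendstoUniformlyOn (fun i p => T i p u) (fun p => T₀ p u) l s := by
  rw [Metric.tendstoUniformlyOn_iff]
  intro ε hε
  obtain ⟨δ, hδ, hCδ⟩ := exists_pos_mul_lt (half_pos hε) (2 * C)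
  obtain ⟨x, hx⟩ := hj.exists_dist_lt u hδ
  filter_upwards [Metric.tendstoUniformlyOn_iff.1 (h x) (ε / 2) (half_pos hε)] with i hi p hp
  have h₁ := dist_clm_apply_le_of_norm_le (hT₀ p hp) hx.le
  have h₂ := dist_clm_apply_le_of_norm_le (hT i p hp) (dist_comm u (j x) ▸ hx.le)
  have h₃ := hi p hp
  linarith [dist_triangle4 (T₀ p u) (T₀ p (j x)) (T i p (j x)) (T i p u)]

end Density

section PartitionProduct

variable {E : Type*} [NormedAddCommGroup E] [NormedSpace ℝ E]

theorem prodOps_congr (S : ℝ → ℝ → E →L[ℝ] E) (t : ℕ → ℝ) {s s' : ℕ → ℝ} {n : ℕ}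
    (h : ∀ j < n, s j = s' j) : prodOps S t s n = prodOps S t s' n := by
  induction n with
  | zero => rfl
  | succ n ih => rw [prodOps, prodOps, h n n.lt_succ_self, ih fun j hj => h j (by omega)]

def partitionProduct (S : ℝ → ℝ → E →L[ℝ] E) (τ : ℕ → ℝ) : ℕ → E →L[ℝ] E :=
  prodOps S τ fun i => τ (i + 1) - τ i

theorem partitionProduct_succ (S : ℝ → ℝ → E →L[ℝ] E) (τ : ℕ → ℝ) (i : ℕ) :
    partitionProduct S τ (i + 1) = (S (τ i) (τ (i + 1) - τ i)).comp (partitionProduct S τ i) :=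
  rfl

theorem IsStableFamily.nonneg {S : ℝ → ℝ → E →L[ℝ] E} {M ω : ℝ} (hS : IsStableFamily S M ω) :
    0 ≤ M := by
  simpa using (norm_nonneg _).trans (hS 0 0 0 (fun _ => le_rfl) (fun _ _ _ => le_rfl)
    (fun _ => le_rfl))

theorem IsStableFamily.norm_apply_partitionProduct_le {S : ℝ → ℝ → E →L[ℝ] E} {M ω : ℝ}
    (hS : IsStableFamily S M ω) {τ : ℕ → ℝ} (hτ0 : ∀ i, 0 ≤ τ i) (hτ : Monotone τ) (i : ℕ)
    {r : ℝ} (hr : 0 ≤ r) (v : E) :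
    ‖S (τ i) r (partitionProduct S τ i v)‖ ≤ M * Real.exp (ω * (τ i - τ 0 + r)) * ‖v‖ := by
  set s := Function.update (fun j => τ (j + 1) - τ j) i r
  have hs : ∀ j < i, s j = τ (j + 1) - τ j := fun j hj => Function.update_of_ne hj.ne _ _
  have hsi : s i = r := Function.update_self _ _ _
  have hprod : (S (τ i) r).comp (partitionProduct S τ i) = prodOps S τ s (i + 1) := by
    rw [prodOps, hsi, partitionProduct, prodOps_congr S τ fun j hj => (hs j hj).symm]
  have hsum : ∑ j ∈ Finset.range (i + 1), s j = τ i - τ 0 + r := by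
    rw [Finset.sum_range_succ, hsi, Finset.sum_congr rfl fun j hj =>
      hs j (Finset.mem_range.1 hj), Finset.sum_range_sub τ]
  have hs0 : ∀ j, 0 ≤ s j := by
    intro j
    rcases eq_or_ne j i with rfl | hj
    · exact hsi ▸ hr
    · simpa [s, Function.update_of_ne hj] using hτ j.le_succ
  calc ‖S (τ i) r (partitionProduct S τ i v)‖ = ‖prodOps S τ s (i + 1) v‖ := by
        rw [← hprod]; rfl
    _ ≤ M * Real.exp (ω * (τ i - τ 0 + r)) * ‖v‖ := by
        rw [← hsum]
        exact (prodOps S τ s (i + 1)).le_of_opNorm_le (hS _ τ s hτ0 (fun _ _ h => hτ h) hs0) v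

end PartitionProduct

noncomputable def uniformPartition (s t : ℝ) (k : ℕ) (j : ℕ) : ℝ := s + j * ((t - s) / k)

section UniformPartition

variable {s t : ℝ} {k : ℕ}

@[simp]
theorem uniformPartition_zero : uniformPartition s t k 0 = s := by simp [uniformPartition]

theorem uniformPartition_self (hk : k ≠ 0) : uniformPartition s t k k = t := by
  rw [uniformPartition, mul_div_cancel₀ _ (Nat.cast_ne_zero.2 hk : (k : ℝ) ≠ 0)]
  ring

theorem uniformPartition_succ_sub (i : ℕ) :
    uniformPartition s t k (i + 1) - uniformPartition s t k i = (t - s) / k := by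
  simp only [uniformPartition]; push_cast; ring

theorem monotone_uniformPartition (hst : s ≤ t) : Monotone (uniformPartition s t k) :=
  fun _ _ hij => add_le_add_right (mul_le_mul_of_nonneg_right (Nat.cast_le.2 hij)
    (div_nonneg (sub_nonneg.2 hst) k.cast_nonneg)) s

end UniformPartition

section Evolution

variable {E : Type*} [NormedAddCommGroup E] [NormedSpace ℝ E]

theorem IsC0Semigroup.hasDerivWithinAt_Ici {S : ℝ → E →L[ℝ] E} (hS : IsC0Semigroup S)
    {a x : ℝ} (hax : a ≤ x) {u d : E}
    (hgen : Tendsto (fun h : ℝ => h⁻¹ • (S h (S (x - a) u) - S (x - a) u)) (𝓝[>] 0) (𝓝 d)) :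
    HasDerivWithinAt (fun σ => S (σ - a) u) d (Ici x) x := by
  rw [hasDerivWithinAt_Ici_iff_tendsto_slope_zero_right]
  refine hgen.congr' (eventually_mem_nhdsWithin.mono fun h (hh : 0 < h) => ?_)
  dsimp only
  rw [show x + h - a = h + (x - a) by ring, hS.2.1 h (x - a) hh.le (sub_nonneg.2 hax)]
  rfl

variable {R : ℝ → ℝ → E →L[ℝ] E} {t C : ℝ}

theorem IsEvolutionSystem.tendsto_apply (hR : IsEvolutionSystem R)
    (hC : ∀ σ ∈ Icc 0 t, ‖R t σ‖ ≤ C) {x : ℝ} (hx : x ∈ Icc 0 t) {α : Type*} {l : Filter α}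
    {σ : α → ℝ} (hσ : Tendsto σ l (𝓝[Icc 0 t] x)) {c : α → E} {d : E}
    (hc : Tendsto c l (𝓝 d)) :
    Tendsto (fun i => R t (σ i) (c i)) l (𝓝 (R t x d)) := by
  obtain ⟨hσx, hmem⟩ := tendsto_nhdsWithin_iff.1 hσ
  refine tendsto_clm_apply_of_norm_le (hmem.mono fun i hi => hC _ hi) hc ?_
  have hpair : Tendsto (fun i => (t, σ i)) l (𝓝[{p : ℝ × ℝ | 0 ≤ p.2 ∧ p.2 ≤ p.1}] (t, x)) :=
    tendsto_nhdsWithin_iff.2 ⟨tendsto_const_nhds.prodMk_nhds hσx, hmem⟩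
  exact (hR.2.2 d (t, x) hx).tendsto.comp hpair

theorem IsEvolutionSystem.continuousOn_apply (hR : IsEvolutionSystem R)
    (hC : ∀ σ ∈ Icc 0 t, ‖R t σ‖ ≤ C) {s : Set ℝ} (hs : s ⊆ Icc 0 t) {c : ℝ → E}
    (hc : ContinuousOn c s) : ContinuousOn (fun σ => R t σ (c σ)) s := fun x hx =>
  hR.tendsto_apply hC (hs hx) (σ := fun y => y) (tendsto_id'.2 (nhdsWithin_mono x hs)) (hc x hx)

theorem IsEvolutionSystem.hasDerivWithinAt_apply (hR : IsEvolutionSystem R)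
    (hC : ∀ σ ∈ Icc 0 t, ‖R t σ‖ ≤ C) {x : ℝ} (hx : 0 ≤ x) (hxt : x < t) {y : ℝ → E}
    {y' a : E} (hy : HasDerivWithinAt y y' (Ici x) x)
    (hRx : Tendsto (fun h : ℝ => h⁻¹ • (R (x + h) x (y x) - y x)) (𝓝[>] 0) (𝓝 a)) :
    HasDerivWithinAt (fun σ => R t σ (y σ)) (R t x (y' - a)) (Ici x) x := by
  rw [hasDerivWithinAt_Ici_iff_tendsto_slope_zero_right] at hy ⊢
  have hshift : Tendsto (fun h => x + h) (𝓝[>] 0) (𝓝[Icc 0 t] x) := by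
    refine tendsto_nhdsWithin_iff.2 ⟨?_, ?_⟩
    · simpa using (tendsto_const_nhds.add tendsto_id).mono_left
        (nhdsWithin_le_nhds (s := Ioi (0 : ℝ)) (a := 0))
    · filter_upwards [Ioo_mem_nhdsGT (sub_pos.2 hxt)] with h hh
      exact ⟨by linarith [hh.1], by linarith [hh.2]⟩
  refine (hR.tendsto_apply hC ⟨hx, hxt.le⟩ hshift (hy.sub hRx)).congr' ?_
  filter_upwards [Ioo_mem_nhdsGT (sub_pos.2 hxt)] with h hh
  have hcomp : R t x (y x) = R t (x + h) (R (x + h) x (y x)) := by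
    rw [← hR.2.1 t (x + h) x hx (by linarith [hh.1]) (by linarith [hh.2])]; rfl
  rw [hcomp, ← smul_sub, ← map_sub, map_smul]
  congr 2
  abel

end Evolution

section Hyperbolic

variable {V E : Type*} [NormedAddCommGroup V] [NormedSpace ℝ V]
  [NormedAddCommGroup E] [NormedSpace ℝ E]
  {iota : V →L[ℝ] E} {A B : ℝ → V →L[ℝ] E} {S : ℝ → ℝ → E →L[ℝ] E}
  {SV : ℝ → ℝ → V →L[ℝ] V} {M om MV omV M' om' : ℝ} {R : ℝ → ℝ → E →L[ℝ] E}

theorem IsDeterminedEvolutionSystem.norm_le (hR : IsDeterminedEvolutionSystem iota A M om R)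
    {s t T : ℝ} (hs : 0 ≤ s) (hst : s ≤ t) (htT : t ≤ T) :
    ‖R t s‖ ≤ M * Real.exp (|om| * T) := by
  have hM : 0 ≤ M := by
    simpa [hR.1.1 t (hs.trans hst)] using (norm_nonneg _).trans (hR.2.1 t t (hs.trans hst) le_rfl)
  refine (hR.2.1 t s hs hst).trans (mul_le_mul_of_nonneg_left (Real.exp_le_exp.2 ?_) hM)
  exact mul_le_abs_mul_of_le (sub_nonneg.2 hst) (by linarith)

theorem norm_evolution_apply_semigroup_sub_le (hB : IsHyperbolicFamily iota B S SV M om MV omV)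
    (hR : IsDeterminedEvolutionSystem iota A M' om' R) {a b t C K : ℝ} (ha : 0 ≤ a)
    (hab : a ≤ b) (hbt : b ≤ t) (hA : ContinuousOn A (Icc a b))
    (hC : ∀ σ ∈ Icc 0 t, ‖R t σ‖ ≤ C) {w : V} (hK : ∀ r ∈ Icc 0 (b - a), ‖SV a r w‖ ≤ K) :
    ‖R t b (S a (b - a) (iota w)) - R t a (iota w)‖ ≤ ∫ σ in a..b, C * K * ‖B a - A σ‖ := by
  have hS := hB.sem_E a ha
  have horbit : ∀ σ ∈ Icc a b, S a (σ - a) (iota w) = iota (SV a (σ - a) w) := fun σ hσ =>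
    (hB.compat a (σ - a) ha (sub_nonneg.2 hσ.1) w).symm
  have hcont : ContinuousOn (fun σ => R t σ (S a (σ - a) (iota w))) (Icc a b) :=
    hR.1.continuousOn_apply hC (Icc_subset_Icc ha hbt)
      ((hS.2.2 (iota w)).comp (continuousOn_id.sub continuousOn_const)
        fun σ hσ => sub_nonneg.2 hσ.1)
  have hderiv : ∀ x ∈ Ico a b, HasDerivWithinAt (fun σ => R t σ (S a (σ - a) (iota w)))
      (R t x (B a (SV a (x - a) w) - A x (SV a (x - a) w))) (Ici x) x := by
    intro x hx
    have hx' := horbit x (Ico_subset_Icc_self hx)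
    refine hR.1.hasDerivWithinAt_apply hC (ha.trans hx.1) (hx.2.trans_le hbt) ?_ ?_
    · exact hS.hasDerivWithinAt_Ici hx.1 (hx' ▸ hB.gen_on_V a ha _)
    · exact hx' ▸ hR.2.2.1 x (ha.trans hx.1) _
  have hbound : ∀ x ∈ Ico a b,
      ‖R t x (B a (SV a (x - a) w) - A x (SV a (x - a) w))‖ ≤ C * K * ‖B a - A x‖ := by
    intro x hx
    have hRx := hC x ⟨ha.trans hx.1, hx.2.le.trans hbt⟩
    have hKx := hK (x - a) ⟨sub_nonneg.2 hx.1, by linarith [hx.2]⟩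
    have hC0 : 0 ≤ C := (norm_nonneg _).trans hRx
    calc ‖R t x (B a (SV a (x - a) w) - A x (SV a (x - a) w))‖
        ≤ C * ‖(B a - A x) (SV a (x - a) w)‖ := (R t x).le_of_opNorm_le hRx _
      _ ≤ C * (‖B a - A x‖ * K) := by
          gcongr
          exact (B a - A x).le_of_opNorm_le_of_le le_rfl hKx
      _ = C * K * ‖B a - A x‖ := by ring
  have hg : ContinuousOn (fun σ => C * K * ‖B a - A σ‖) (Icc a b) :=
    continuousOn_const.mul (continuousOn_const.sub hA).norm
  simpa [hS.1] using norm_sub_le_integral_of_norm_deriv_right_le hab hcont hderiv hg hbound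

theorem norm_partitionProduct_sub_evolution_le
    (hB : IsHyperbolicFamily iota B S SV M om MV omV)
    (hR : IsDeterminedEvolutionSystem iota A M' om' R) {τ : ℕ → ℝ} {k : ℕ} (hτ0 : 0 ≤ τ 0)
    (hτ : Monotone τ) (hA : ContinuousOn A (Icc (τ 0) (τ k)))
    (hBc : ContinuousOn B (Icc (τ 0) (τ k))) {C K η : ℝ}
    (hC : ∀ σ ∈ Icc 0 (τ k), ‖R (τ k) σ‖ ≤ C) {v : V}
    (hK : ∀ i < k, ∀ r ∈ Icc 0 (τ (i + 1) - τ i), ‖SV (τ i) r (partitionProduct SV τ i v)‖ ≤ K)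
    (hη : ∀ i < k, ∀ σ ∈ Icc (τ i) (τ (i + 1)), ‖B (τ i) - B σ‖ ≤ η) :
    ‖iota (partitionProduct SV τ k v) - R (τ k) (τ 0) (iota v)‖ ≤
      ∫ σ in τ 0..τ k, C * K * (η + ‖A σ - B σ‖) := by
  have hg : ContinuousOn (fun σ => C * K * (η + ‖A σ - B σ‖)) (Icc (τ 0) (τ k)) :=
    continuousOn_const.mul (continuousOn_const.add (hA.sub hBc).norm)
  have hsub : ∀ i < k, Icc (τ i) (τ (i + 1)) ⊆ Icc (τ 0) (τ k) := fun i hi =>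
    Icc_subset_Icc (hτ (Nat.zero_le i)) (hτ hi)
  have hstep : ∀ i < k, ‖R (τ k) (τ (i + 1)) (iota (partitionProduct SV τ (i + 1) v)) -
      R (τ k) (τ i) (iota (partitionProduct SV τ i v))‖ ≤
        ∫ σ in τ i..τ (i + 1), C * K * (η + ‖A σ - B σ‖) := by
    intro i hi
    have hτi : 0 ≤ τ i := hτ0.trans (hτ (Nat.zero_le i))
    have hτi' : τ i ≤ τ (i + 1) := hτ i.le_succ
    have hC0 : 0 ≤ C := (norm_nonneg _).trans (hC (τ k) ⟨hτi.trans (hτ hi.le), le_rfl⟩)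
    have hK0 : 0 ≤ K := (norm_nonneg _).trans (hK i hi 0 ⟨le_rfl, sub_nonneg.2 hτi'⟩)
    rw [partitionProduct_succ, ContinuousLinearMap.comp_apply,
      hB.compat _ _ hτi (sub_nonneg.2 hτi')]
    refine (norm_evolution_apply_semigroup_sub_le hB hR hτi hτi' (hτ hi) ((hA.mono (hsub i hi)))
      hC (hK i hi)).trans (intervalIntegral.integral_mono_on hτi' ?_ ?_ fun σ hσ => ?_)
    · exact (continuousOn_const.mul (continuousOn_const.sub (hA.mono (hsub i hi))).norm)
        |>.intervalIntegrable_of_Icc hτi'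
    · exact (hg.mono (hsub i hi)).intervalIntegrable_of_Icc hτi'
    · have := mul_nonneg hC0 hK0
      gcongr
      rw [norm_sub_rev (A σ)]
      exact (norm_sub_le_norm_sub_add_norm_sub _ (B σ) _).trans (by gcongr; exact hη i hi σ hσ)
  have := norm_sub_le_integral_of_norm_sub_succ_le
    (F := fun i => R (τ k) (τ i) (iota (partitionProduct SV τ i v)))
    (fun i hi => (hg.mono (hsub i hi)).intervalIntegrable_of_Icc (hτ i.le_succ)) hstep
  rwa [hR.1.1 _ (hτ0.trans (hτ (Nat.zero_le k)))] at this

theorem norm_uniformPartitionProduct_sub_evolution_le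
    (hB : IsHyperbolicFamily iota B S SV M om MV omV)
    (hR : IsDeterminedEvolutionSystem iota A M' om' R) (hA : ContinuousOn A (Ici 0))
    {T η δ : ℝ} (hδ : ∀ x ∈ Icc 0 T, ∀ y ∈ Icc 0 T, dist x y ≤ δ → ‖B x - B y‖ ≤ η)
    {k : ℕ} (hk : k ≠ 0) (hkδ : T / k ≤ δ) {s t : ℝ} (hs : 0 ≤ s) (hst : s ≤ t) (htT : t ≤ T)
    (v : V) :
    ‖iota (partitionProduct SV (uniformPartition s t k) k v) - R t s (iota v)‖ ≤
      M' * Real.exp (|om'| * T) * (MV * Real.exp (|omV| * T) * ‖v‖) *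
        (η * T + ∫ r in (0 : ℝ)..T, ‖A r - B r‖) := by
  set τ := uniformPartition s t k
  have hτ : Monotone τ := monotone_uniformPartition hst
  have hτ0 : τ 0 = s := uniformPartition_zero
  have hτk : τ k = t := uniformPartition_self hk
  have hτs : ∀ i, s ≤ τ i := fun i => hτ0 ▸ hτ (Nat.zero_le i)
  have hmesh : ∀ i, τ (i + 1) - τ i ≤ δ := fun i => by
    rw [uniformPartition_succ_sub]
    exact (div_le_div_of_nonneg_right (by linarith) k.cast_nonneg).trans hkδ
  have hT : 0 ≤ T := hs.trans (hst.trans htT)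
  have hη : 0 ≤ η := by
    simpa using hδ 0 ⟨le_rfl, hT⟩ 0 ⟨le_rfl, hT⟩
      (by simpa using (div_nonneg hT k.cast_nonneg).trans hkδ)
  set C := M' * Real.exp (|om'| * T)
  set K := MV * Real.exp (|omV| * T) * ‖v‖
  have hC : ∀ σ ∈ Icc 0 (τ k), ‖R (τ k) σ‖ ≤ C := fun σ hσ =>
    hR.norm_le hσ.1 hσ.2 (hτk ▸ htT)
  have hK : ∀ i < k, ∀ r ∈ Icc 0 (τ (i + 1) - τ i),
      ‖SV (τ i) r (partitionProduct SV τ i v)‖ ≤ K := by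
    intro i hi r hr
    have hτi : τ (i + 1) ≤ t := hτk ▸ hτ hi
    refine (hB.stable_V.norm_apply_partitionProduct_le (fun i => hs.trans (hτs i)) hτ i hr.1
      v).trans (mul_le_mul_of_nonneg_right (mul_le_mul_of_nonneg_left (Real.exp_le_exp.2 ?_)
        hB.stable_V.nonneg) (norm_nonneg v))
    exact mul_le_abs_mul_of_le (by linarith [hτs i, hr.1]) (by linarith [hr.2])
  have hηi : ∀ i < k, ∀ σ ∈ Icc (τ i) (τ (i + 1)), ‖B (τ i) - B σ‖ ≤ η := by
    intro i hi σ hσ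
    have hτi : τ (i + 1) ≤ t := hτk ▸ hτ hi
    refine hδ _ ⟨hs.trans (hτs i), by linarith [hσ.1, hσ.2]⟩ _
      ⟨by linarith [hτs i, hσ.1], by linarith [hσ.2]⟩ ?_
    rw [Real.dist_eq, abs_sub_comm, abs_of_nonneg (by linarith [hσ.1])]
    linarith [hσ.2, hmesh i]
  have hchain := norm_partitionProduct_sub_evolution_le hB hR (hτ0 ▸ hs) hτ
    (hA.mono fun σ hσ => (hs.trans (hτs 0)).trans hσ.1)
    (hB.contA.mono fun σ hσ => (hs.trans (hτs 0)).trans hσ.1) hC hK hηi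
  rw [hτ0, hτk] at hchain
  have hCK : 0 ≤ C * K := by
    have := hB.stable_V.nonneg
    exact mul_nonneg ((norm_nonneg _).trans (hC (τ k) ⟨hτk ▸ hs.trans hst, le_rfl⟩))
      (by positivity)
  exact hchain.trans (integral_mul_add_le_of_subinterval hCK hη
    (((hA.sub hB.contA).norm).mono Icc_subset_Ici_self) (fun _ => norm_nonneg _) hs hst htT)

theorem tendstoUniformlyOn_evolution_apply_of_tendsto_integral
    (hB : IsHyperbolicFamily iota B S SV M om MV omV)
    (hR : IsDeterminedEvolutionSystem iota B M om R) {An : ℕ → ℝ → V →L[ℝ] E}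
    {Rn : ℕ → ℝ → ℝ → E →L[ℝ] E} (hAn : ∀ n, ContinuousOn (An n) (Ici 0))
    (hRn : ∀ n, IsDeterminedEvolutionSystem iota (An n) M om (Rn n)) {T : ℝ}
    (hconv : Tendsto (fun n => ∫ r in (0 : ℝ)..T, ‖An n r - B r‖) atTop (𝓝 0)) (v : V) :
    TendstoUniformlyOn (fun n (p : ℝ × ℝ) => Rn n p.1 p.2 (iota v))
      (fun p => R p.1 p.2 (iota v)) atTop {p | 0 ≤ p.2 ∧ p.2 ≤ p.1 ∧ p.1 ≤ T} := by
  rw [Metric.tendstoUniformlyOn_iff]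
  intro ε hε
  set C := M * Real.exp (|om| * T)
  set K := MV * Real.exp (|omV| * T) * ‖v‖
  obtain ⟨η, hη, hηε⟩ := exists_pos_mul_lt hε (C * K * (2 * T + 1))
  obtain ⟨δ, hδ, hBδ⟩ : ∃ δ > 0, ∀ x ∈ Icc 0 T, ∀ y ∈ Icc 0 T, dist x y ≤ δ →
      ‖B x - B y‖ ≤ η := by
    simpa [dist_eq_norm] using Metric.uniformContinuousOn_iff_le.1
      (isCompact_Icc.uniformContinuousOn_of_continuous (hB.contA.mono Icc_subset_Ici_self)) η hη
  obtain ⟨k, hk⟩ := exists_nat_gt (T / δ)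
  have hkδ : T / (k + 1 : ℕ) ≤ δ := by
    rw [div_le_iff₀ (by positivity), Nat.cast_succ]
    rw [div_lt_iff₀ hδ] at hk
    nlinarith
  filter_upwards [hconv (Iio_mem_nhds hη)] with n hn
  rintro ⟨t, s⟩ ⟨hs, hst, htT⟩
  dsimp only at hs hst htT ⊢
  have hT : 0 ≤ T := hs.trans (hst.trans htT)
  have hCK : 0 ≤ C * K := by
    have := hB.stable_V.nonneg
    exact mul_nonneg ((norm_nonneg _).trans (hR.norm_le le_rfl le_rfl hT)) (by positivity)
  set z := iota (partitionProduct SV (uniformPartition s t (k + 1)) (k + 1) v)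
  have hμ : ‖z - R t s (iota v)‖ ≤ C * K * (η * T) := by
    simpa using norm_uniformPartitionProduct_sub_evolution_le hB hR hB.contA hBδ
      k.succ_ne_zero hkδ hs hst htT v
  have hn' : ‖z - Rn n t s (iota v)‖ ≤ C * K * (η * T + η) :=
    (norm_uniformPartitionProduct_sub_evolution_le hB (hRn n) (hAn n) hBδ k.succ_ne_zero hkδ
      hs hst htT v).trans (by gcongr; exact (mem_Iio.1 hn).le)
  calc dist (R t s (iota v)) (Rn n t s (iota v))
      ≤ dist z (R t s (iota v)) + dist z (Rn n t s (iota v)) := dist_triangle_left _ _ _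
    _ < ε := by rw [dist_eq_norm, dist_eq_norm]; nlinarith

end Hyperbolic

theorem hyperbolic_evolution_systems_continuity_general
    {V E : Type*} [NormedAddCommGroup V] [NormedSpace ℝ V]
    [NormedAddCommGroup E] [NormedSpace ℝ E]
    {P : Type*} [MetricSpace P]
    (iota : V →L[ℝ] E) (hdense : DenseRange iota)
    (A : P → ℝ → (V →L[ℝ] E)) (S : P → ℝ → ℝ → E →L[ℝ] E) (SV : P → ℝ → ℝ → V →L[ℝ] V)
    (M om MV omV : ℝ)
    (hhyp : ∀ μ : P, IsHyperbolicFamily iota (A μ) (S μ) (SV μ) M om MV omV)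
    (R : P → ℝ → ℝ → E →L[ℝ] E)
    (hdet : ∀ μ : P, IsDeterminedEvolutionSystem iota (A μ) M om (R μ))
    (hconv : ∀ (μ : P) (T : ℝ), 0 < T →
      Tendsto (fun ν : P => ∫ r in (0:ℝ)..T, ‖A ν r - A μ r‖) (𝓝 μ) (𝓝 0)) :
    ∀ (u0 : E) (μ : P) (μn : ℕ → P), Tendsto μn atTop (𝓝 μ) →
      ∀ T : ℝ, 0 < T → ∀ ε > (0:ℝ), ∃ N : ℕ, ∀ n ≥ N, ∀ t s : ℝ,
        0 ≤ s → s ≤ t → t ≤ T → ‖R (μn n) t s u0 - R μ t s u0‖ ≤ ε := by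
  intro u0 μ μn hμn T hT ε hε
  have hunif := tendstoUniformlyOn_clm_apply_of_denseRange hdense
    (fun n p hp => (hdet (μn n)).norm_le hp.1 hp.2.1 hp.2.2)
    (fun p hp => (hdet μ).norm_le hp.1 hp.2.1 hp.2.2)
    (tendstoUniformlyOn_evolution_apply_of_tendsto_integral (hhyp μ) (hdet μ)
      (fun n => (hhyp (μn n)).contA) (fun n => hdet (μn n)) ((hconv μ T hT).comp hμn)) u0
  obtain ⟨N, hN⟩ := eventually_atTop.1 (Metric.tendstoUniformlyOn_iff.1 hunif ε hε)
  exact ⟨N, fun n hn t s hs hst htT => by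
    simpa [dist_eq_norm, norm_sub_rev] using (hN n hn (t, s) ⟨hs, hst, htT⟩).le⟩

/-- Proposition 3.2(ii): if `∫₀ᵀ ‖A^{(ν)}(r) − A^{(μ)}(r)‖ dr → 0` as `ν → μ`, then the
family of determined evolution systems is continuous: `R^{(μₙ)}(t,s)ū → R^{(μ)}(t,s)ū`
uniformly with respect to `t ≥ s ≥ 0` from bounded intervals. -/
theorem hyperbolic_evolution_systems_continuity
    {V E : Type*} [NormedAddCommGroup V] [NormedSpace ℝ V] [CompleteSpace V]
    [NormedAddCommGroup E] [NormedSpace ℝ E] [CompleteSpace E]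
    {P : Type*} [MetricSpace P]
    (iota : V →L[ℝ] E) (hinj : Function.Injective iota) (hdense : DenseRange iota)
    (A : P → ℝ → (V →L[ℝ] E)) (S : P → ℝ → ℝ → E →L[ℝ] E) (SV : P → ℝ → ℝ → V →L[ℝ] V)
    (M om MV omV : ℝ) (hM : 1 ≤ M) (hMV : 1 ≤ MV)
    (hhyp : ∀ μ : P, IsHyperbolicFamily iota (A μ) (S μ) (SV μ) M om MV omV)
    (R : P → ℝ → ℝ → E →L[ℝ] E)
    (hdet : ∀ μ : P, IsDeterminedEvolutionSystem iota (A μ) M om (R μ))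
    (hconv : ∀ (μ : P) (T : ℝ), 0 < T →
      Tendsto (fun ν : P => ∫ r in (0:ℝ)..T, ‖A ν r - A μ r‖) (𝓝 μ) (𝓝 0)) :
    ∀ (u0 : E) (μ : P) (μn : ℕ → P), Tendsto μn atTop (𝓝 μ) →
      ∀ T : ℝ, 0 < T → ∀ ε > (0:ℝ), ∃ N : ℕ, ∀ n ≥ N, ∀ t s : ℝ,
        0 ≤ s → s ≤ t → t ≤ T → ‖R (μn n) t s u0 - R μ t s u0‖ ≤ ε :=
  hyperbolic_evolution_systems_continuity_general iota hdense A S SV M om MV omV hhyp R hdet hconv
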